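/- arXiv:0902.4483 — 2 statements merged into one kernel-verified Lean document; each statement's English description precedes it below -/
import Mathlib

section
/- Let x_1, ..., x_k ∈ ℝ^n and α_1, ..., α_k ∈ ℝ with ∑_{i=1}^k α_i = 1. Then ∑_{i,j=1}^k α_i α_j ‖x_i - x_j‖₁ ≤ (1/2) ∑_{s=1}^n D(P_s({x_1,...,x_k})), where P_s is the s-th coordinate projection and D denotes diameter in ℝ. -/
/-!
The ℓ¹ distance splits into coordinates, so it suffices to treat real numbers a_i.
With f_i = 1_{(-∞, a_i)} one has |a_i - a_j| = ∫ (f_i - f_j)² over [min a, max a).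
For fixed t the values f_i(t) lie in {0, 1}, so with S = ∑ α_i f_i(t) the integrand
∑ α_i α_j (f_i - f_j)² equals 2S(1 - S) ≤ 1/2; integrating over an interval of length
diam(a) gives the bound.
-/

open MeasureTheory Set

theorem sum_sum_mul_mul_sub_sq {ι R : Type*} [CommRing R] (s : Finset ι) (α f : ι → R) :
    ∑ i ∈ s, ∑ j ∈ s, α i * α j * (f i - f j) ^ 2 =
      2 * (∑ i ∈ s, α i) * (∑ i ∈ s, α i * f i ^ 2) -
        2 * (∑ i ∈ s, α i * f i) ^ 2 := by
  have expand : ∀ i j, α i * α j * (f i - f j) ^ 2 =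
      α i * (α j * f j ^ 2) + α i * f i ^ 2 * α j - 2 * (α i * f i * (α j * f j)) :=
    fun i j => by ring
  simp only [expand, Finset.sum_sub_distrib, Finset.sum_add_distrib, ← Finset.mul_sum,
    ← Finset.sum_mul]
  ring

theorem sum_sum_mul_mul_sub_sq_le_of_sq_eq_self {ι : Type*} (s : Finset ι) {α f : ι → ℝ}
    (hα : ∑ i ∈ s, α i = 1) (hf : ∀ i, f i ^ 2 = f i) :
    ∑ i ∈ s, ∑ j ∈ s, α i * α j * (f i - f j) ^ 2 ≤ 1 / 2 := by
  rw [sum_sum_mul_mul_sub_sq, hα]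
  simp only [hf]
  nlinarith [sq_nonneg (2 * ∑ i ∈ s, α i * f i - 1)]

theorem sq_indicator_Iio_sub_indicator_Iio (a b t : ℝ) :
    ((Iio a).indicator 1 t - (Iio b).indicator 1 t) ^ 2 =
      (Ico (min a b) (max a b)).indicator (1 : ℝ → ℝ) t := by
  simp only [indicator_apply, mem_Iio, mem_Ico, Pi.one_apply, min_le_iff, lt_max_iff]
  split_ifs <;> grind

theorem integrable_sq_indicator_Iio_sub_indicator_Iio (a b : ℝ) :
    Integrable fun t => ((Iio a).indicator (1 : ℝ → ℝ) t - (Iio b).indicator 1 t) ^ 2 := by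
  simp_rw [sq_indicator_Iio_sub_indicator_Iio]
  exact (integrableOn_const (by simp)).integrable_indicator measurableSet_Ico

theorem setIntegral_sq_indicator_Iio_sub_indicator_Iio {a b m M : ℝ} (ha : a ∈ Icc m M)
    (hb : b ∈ Icc m M) :
    ∫ t in Ico m M, ((Iio a).indicator (1 : ℝ → ℝ) t - (Iio b).indicator 1 t) ^ 2 =
      |a - b| := by
  have hsub : Ico (min a b) (max a b) ⊆ Ico m M :=
    Ico_subset_Ico (le_min ha.1 hb.1) (max_le ha.2 hb.2)
  simp_rw [sq_indicator_Iio_sub_indicator_Iio]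
  rw [setIntegral_indicator measurableSet_Ico, inter_eq_right.2 hsub]
  simp only [Pi.one_apply]
  rw [setIntegral_const, smul_eq_mul, mul_one, Real.volume_real_Ico_of_le min_le_max,
    max_sub_min_eq_abs, abs_sub_comm]

theorem sum_sum_mul_mul_abs_sub_le_half_diam {ι : Type*} [Fintype ι] (a α : ι → ℝ)
    (hα : ∑ i, α i = 1) :
    ∑ i, ∑ j, α i * α j * |a i - a j| ≤ 1 / 2 * Metric.diam (range a) := by
  obtain ⟨i₀⟩ : Nonempty ι := by
    by_contra h
    simp [not_nonempty_iff.mp h] at hα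
  set m := ⨅ i, a i
  set M := ⨆ i, a i
  have ha : ∀ i, a i ∈ Icc m M := fun i =>
    ⟨ciInf_le (Finite.bddBelow_range a) i, le_ciSup (Finite.bddAbove_range a) i⟩
  set f : ι → ℝ → ℝ := fun i => (Iio (a i)).indicator 1
  have hint : ∀ i j, IntegrableOn (fun t => α i * α j * (f i t - f j t) ^ 2) (Ico m M) :=
    fun i j => ((integrable_sq_indicator_Iio_sub_indicator_Iio _ _).const_mul _).integrableOn
  calc ∑ i, ∑ j, α i * α j * |a i - a j|
      = ∑ i, ∑ j, ∫ t in Ico m M, α i * α j * (f i t - f j t) ^ 2 := by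
        simp_rw [integral_const_mul, f,
          setIntegral_sq_indicator_Iio_sub_indicator_Iio (ha _) (ha _)]
    _ = ∫ t in Ico m M, ∑ i, ∑ j, α i * α j * (f i t - f j t) ^ 2 := by
        rw [integral_finsetSum _ fun i _ => integrable_finsetSum _ fun j _ => hint i j]
        simp_rw [integral_finsetSum _ fun j _ => hint _ j]
    _ ≤ ∫ _ in Ico m M, 1 / 2 := by
        refine setIntegral_mono (integrable_finsetSum _ fun i _ =>
          integrable_finsetSum _ fun j _ => hint i j) (integrableOn_const (by simp)) fun t => ?_
        refine sum_sum_mul_mul_sub_sq_le_of_sq_eq_self _ hα fun i => ?_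
        by_cases ht : t ∈ Iio (a i) <;> simp [f, ht]
    _ = 1 / 2 * Metric.diam (range a) := by
        rw [setIntegral_const, smul_eq_mul,
          Real.volume_real_Ico_of_le ((ha i₀).1.trans (ha i₀).2),
          Real.diam_eq (finite_range a).isBounded, mul_comm]
        rfl

theorem stmt_5 (n k : ℕ) (x : Fin k → PiLp 1 fun _ : Fin n => ℝ) (α : Fin k → ℝ)
    (hsum : ∑ i, α i = 1) :
    ∑ i, ∑ j, α i * α j * ‖x i - x j‖ ≤
      (1 / 2) * ∑ s : Fin n, Metric.diam (Set.range fun i => x i s) := by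
  calc ∑ i, ∑ j, α i * α j * ‖x i - x j‖
      = ∑ s : Fin n, ∑ i, ∑ j, α i * α j * |x i s - x j s| := by
        simp_rw [← dist_eq_norm, PiLp.dist_eq_of_L1, Real.dist_eq, Finset.mul_sum]
        exact (Finset.sum_congr rfl fun i _ => Finset.sum_comm).trans Finset.sum_comm
    _ ≤ ∑ s : Fin n, 1 / 2 * Metric.diam (Set.range fun i => x i s) :=
        Finset.sum_le_sum fun s _ => sum_sum_mul_mul_abs_sub_le_half_diam _ α hsum
    _ = (1 / 2) * ∑ s : Fin n, Metric.diam (Set.range fun i => x i s) := by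
        rw [Finset.mul_sum]
end

section
/- Every compact subset X of ℝ (with the usual metric) satisfies M(X) = D(X)/2, where M(X) is the supremum of ∑_{i,j} α_i α_j |x_i - x_j| over all finitely supported signed measures of total mass 1 on X (i.e., over all finite tuples x_i ∈ X and reals α_i with ∑ α_i = 1), and D(X) is the diameter of X. -/
/-!
Writing `g_i = 𝟙[x_i, ∞)`, one has `|x_i - x_j| = ∫_m^M |g_i - g_j|` for all points
in `[m, M]`.
For each `t` the values `g_i t` lie in `{0, 1}`, so with `σ = ∑ α_i g_i t` the integrand
`∑ α_i α_j |g_i t - g_j t|` equals `2σ(1 - σ) ≤ 1/2`, whatever the signs of the weights.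
Integrating gives `∑ α_i α_j |x_i - x_j| ≤ (M - m)/2`, and the two endpoints of `X`
with weight `1/2` each attain this bound.
-/

open MeasureTheory Set Finset

lemma sum_sum_mul_abs_sub_le_of_mem_zero_one {ι : Type*} [Fintype ι] {α g : ι → ℝ}
    (hα : ∑ i, α i = 1) (hg : ∀ i, g i = 0 ∨ g i = 1) :
    ∑ i, ∑ j, α i * α j * |g i - g j| ≤ 1 / 2 := by
  set σ := ∑ i, α i * g i
  have habs : ∀ i j, |g i - g j| = g i + g j - 2 * (g i * g j) := by
    intro i j
    rcases hg i with hi | hi <;> rcases hg j with hj | hj <;> norm_num [hi, hj]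
  have hsum : ∑ i, ∑ j, α i * α j * |g i - g j| = 2 * σ - 2 * σ ^ 2 := by
    calc ∑ i, ∑ j, α i * α j * |g i - g j|
        = ∑ i, ∑ j,
            (α i * g i * α j + α i * (α j * g j) - 2 * (α i * g i) * (α j * g j)) := by
          simp only [habs]; congr! 2; ring
      _ = σ * ∑ j, α j + (∑ i, α i) * σ - 2 * σ * σ := by
          simp only [sum_sub_distrib, sum_add_distrib, ← mul_sum, ← sum_mul, σ]
      _ = 2 * σ - 2 * σ ^ 2 := by rw [hα]; ring
  nlinarith [sq_nonneg (σ - 1 / 2)]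

lemma abs_indicator_Ici_sub_indicator_Ici (a b t : ℝ) :
    |(Ici a).indicator 1 t - (Ici b).indicator 1 t| =
      (Ico (min a b) (max a b)).indicator (1 : ℝ → ℝ) t := by
  rcases le_total a b with h | h <;>
    simp only [h, min_eq_left, min_eq_right, max_eq_left, max_eq_right, indicator_apply,
      Set.mem_Ici, Set.mem_Ico, Pi.one_apply] <;>
    split_ifs <;> grind

lemma abs_sub_eq_setIntegral_Icc {m M a b : ℝ} (ha : a ∈ Icc m M) (hb : b ∈ Icc m M) :
    |a - b| = ∫ t in Icc m M, |(Ici a).indicator 1 t - (Ici b).indicator 1 t| := by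
  have hsub : Ico (min a b) (max a b) ⊆ Icc m M := fun t ht =>
    ⟨(le_min ha.1 hb.1).trans ht.1, ht.2.le.trans (max_le ha.2 hb.2)⟩
  simp only [abs_indicator_Ici_sub_indicator_Ici]
  rw [integral_indicator_one measurableSet_Ico, measureReal_restrict_apply measurableSet_Ico,
    inter_eq_left.mpr hsub, Real.volume_real_Ico_of_le min_le_max, max_sub_min_eq_abs']

lemma sum_sum_mul_abs_sub_le_half_sub {ι : Type*} [Fintype ι] {α x : ι → ℝ} {m M : ℝ}
    (hα : ∑ i, α i = 1) (hx : ∀ i, x i ∈ Icc m M) :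
    ∑ i, ∑ j, α i * α j * |x i - x j| ≤ (M - m) / 2 := by
  obtain ⟨i₀, -, -⟩ := exists_ne_zero_of_sum_ne_zero (hα ▸ one_ne_zero : ∑ i, α i ≠ 0)
  have hmM : m ≤ M := (hx i₀).1.trans (hx i₀).2
  set g : ι → ℝ → ℝ := fun i => (Ici (x i)).indicator 1
  have hint : ∀ i j,
      Integrable (fun t => α i * α j * |g i t - g j t|) (volume.restrict (Icc m M)) := by
    intro i j
    simp only [g, abs_indicator_Ici_sub_indicator_Ici]
    exact ((integrable_const 1).indicator measurableSet_Ico).const_mul _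
  calc ∑ i, ∑ j, α i * α j * |x i - x j|
      = ∫ t in Icc m M, ∑ i, ∑ j, α i * α j * |g i t - g j t| := by
        rw [integral_finsetSum _ fun i _ => integrable_finsetSum _ fun j _ => hint i j]
        refine sum_congr rfl fun i _ => ?_
        rw [integral_finsetSum _ fun j _ => hint i j]
        refine sum_congr rfl fun j _ => ?_
        rw [integral_const_mul, ← abs_sub_eq_setIntegral_Icc (hx i) (hx j)]
    _ ≤ ∫ _ in Icc m M, (1 / 2 : ℝ) := by
        refine setIntegral_mono_on (integrable_finsetSum _ fun i _ =>
          integrable_finsetSum _ fun j _ => hint i j) (integrable_const _) measurableSet_Icc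
          fun t _ => sum_sum_mul_abs_sub_le_of_mem_zero_one hα fun i =>
            indicator_eq_zero_or_self _ _ _
    _ = (M - m) / 2 := by
        rw [setIntegral_const, Real.volume_real_Icc_of_le hmM, smul_eq_mul]; ring

theorem stmt_10 (X : Set ℝ) (hX : IsCompact X) (hne : X.Nonempty) :
    sSup {r : ℝ | ∃ (k : ℕ) (x : Fin k → ℝ) (α : Fin k → ℝ),
        (∀ i, x i ∈ X) ∧ ∑ i, α i = 1 ∧
          r = ∑ i, ∑ j, α i * α j * |x i - x j|} =
      Metric.diam X / 2 := by
  have hm : sInf X ∈ X := hX.sInf_mem hne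
  have hM : sSup X ∈ X := hX.sSup_mem hne
  have hX_Icc : ∀ y ∈ X, y ∈ Icc (sInf X) (sSup X) := fun y hy =>
    ⟨csInf_le hX.bddBelow hy, le_csSup hX.bddAbove hy⟩
  rw [Real.diam_eq hX.isBounded]
  refine IsGreatest.csSup_eq ⟨⟨2, ![sInf X, sSup X], ![1 / 2, 1 / 2], ?_, ?_, ?_⟩, ?_⟩
  · intro i; fin_cases i <;> assumption
  · norm_num [Fin.sum_univ_two]
  · have hle : sInf X ≤ sSup X := (hX_Icc _ hm).2
    simp only [Fin.sum_univ_two, Matrix.cons_val_zero, Matrix.cons_val_one,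
      Matrix.cons_val_fin_one, sub_self, abs_zero, abs_sub_comm (sInf X),
      abs_of_nonneg (sub_nonneg.mpr hle)]
    ring
  · rintro r ⟨k, x, α, hx, hα, rfl⟩
    exact sum_sum_mul_abs_sub_le_half_sub hα fun i => hX_Icc _ (hx i)
end
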